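/- arXiv:1709.08891 — 2 statements merged into one kernel-verified Lean document; each statement's English description precedes it below -/
import Mathlib

section
/- Let k >= 1 and let G be a d-regular cyclically (d-1+2k)-edge-connected graph of even order, and let X be a set of d-1+k edges of G such that G - X has an independent set I with |I| > |V(G)|/2. Then the vertices of V(G) - I induce at most k-1 edges in G - X. -/
/-!
Work in `H = G - X`. Since `I` is independent in `H`, every dart of `H` leaving `I` enters
`V - I`; hence the degree sum of `H` over `V - I` is its degree sum over `I` plus twice the
number of edges inside `V - I`. Regularity bounds the former by `d·|V - I|`, and deleting `X`
lowers degree sums by at most `2|X|`, so the degree sum of `H` over `I` is at least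
`d·|I| - 2|X|`. As `|V|` is even, `|I| ≥ |V - I| + 2`, so twice the number of edges inside
`V - I` is at most `2|X| - 2d = 2(k - 1)`.
-/

open Finset

namespace SimpleGraph

variable {V : Type*} [Fintype V]

section Darts

variable (H : SimpleGraph V) [DecidableRel H.Adj] [DecidableEq V]

theorem sum_degree_eq_card_darts_fst_mem (s : Finset V) :
    ∑ v ∈ s, H.degree v = #{d : H.Dart | d.fst ∈ s} := by
  rw [card_eq_sum_card_fiberwise (f := fun d : H.Dart => d.fst) (t := s)
    fun d hd => by simpa using hd]
  refine sum_congr rfl fun v hv => ?_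
  rw [← dart_fst_fiber_card_eq_degree, filter_filter]
  congr 1
  exact filter_congr fun d _ => ⟨fun h => ⟨h ▸ hv, h⟩, And.right⟩

theorem card_darts_edge_mem (T : Finset (Sym2 V)) (hT : ↑T ⊆ H.edgeSet) :
    #{d : H.Dart | d.edge ∈ T} = 2 * #T := by
  rw [card_eq_sum_card_fiberwise (f := fun d : H.Dart => d.edge) (t := T)
      fun d hd => by simpa using hd,
    mul_comm, ← smul_eq_mul, ← sum_const]
  refine sum_congr rfl fun e he => ?_
  rw [filter_filter, ← H.dart_edge_fiber_card e (hT he)]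
  congr 1
  exact filter_congr fun d _ => ⟨And.right, fun h => ⟨h ▸ he, h⟩⟩

theorem IsIndepSet.sum_degree_compl {I : Finset V} (hI : H.IsIndepSet I) :
    ∑ v ∈ Iᶜ, H.degree v =
      ∑ v ∈ I, H.degree v + 2 * {e | e ∈ H.edgeSet ∧ ∀ v ∈ e, v ∉ I}.ncard := by
  rw [sum_degree_eq_card_darts_fst_mem, sum_degree_eq_card_darts_fst_mem,
    ← card_filter_add_card_filter_not (s := {d : H.Dart | d.fst ∈ Iᶜ}) (fun d => d.snd ∈ I),
    filter_filter, filter_filter]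
  congr 1
  · refine card_nbij' Dart.symm Dart.symm ?_ ?_ (fun d _ => d.symm_symm) (fun d _ => d.symm_symm)
    · intro d hd
      simp only [coe_filter, mem_univ, true_and, Set.mem_ofPred_eq, Dart.symm_toProd,
        mem_compl] at hd ⊢
      exact hd.2
    · intro d hd
      simp only [coe_filter, mem_univ, true_and, Set.mem_ofPred_eq, Dart.symm_toProd,
        mem_compl] at hd ⊢
      exact ⟨fun h => (hI hd h d.adj.ne d.adj).elim, hd⟩
  · rw [Set.ncard_eq_toFinset_card _ (Set.toFinite _), ← card_darts_edge_mem H _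
      fun e he => by simp only [Set.Finite.coe_toFinset] at he; exact he.1]
    congr 1
    refine filter_congr fun ⟨(u, w), huw⟩ _ => ?_
    simp [huw]

end Darts

theorem sum_degree_le_sum_degree_deleteEdges_add (G : SimpleGraph V) [DecidableRel G.Adj]
    (X : Set (Sym2 V)) [DecidableRel (G.deleteEdges X).Adj] (s : Finset V) :
    ∑ v ∈ s, G.degree v ≤ ∑ v ∈ s, (G.deleteEdges X).degree v + 2 * X.ncard := by
  classical
  have hdeg (v : V) : G.degree v ≤ (G.deleteEdges X).degree v + (fromEdgeSet X).degree v :=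
    calc G.degree v ≤ (G.deleteEdges X ⊔ fromEdgeSet X).degree v := degree_le_of_le le_sdiff_sup
      _ = #((G.deleteEdges X).neighborFinset v ∪ (fromEdgeSet X).neighborFinset v) := by
        rw [← card_neighborFinset_eq_degree, neighborFinset_sup]
      _ ≤ _ := card_union_le _ _
  have hX : ∑ v ∈ s, (fromEdgeSet X).degree v ≤ 2 * X.ncard :=
    calc ∑ v ∈ s, (fromEdgeSet X).degree v ≤ ∑ v, (fromEdgeSet X).degree v :=
          sum_le_sum_of_subset (subset_univ s)
      _ ≤ 2 * X.ncard := by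
        rw [sum_degrees_eq_twice_card_edges, ← Set.ncard_coe_finset, coe_edgeFinset,
          edgeSet_fromEdgeSet]
        exact Nat.mul_le_mul_left 2 (Set.ncard_le_ncard Set.sdiff_subset X.toFinite)
  calc ∑ v ∈ s, G.degree v
      ≤ ∑ v ∈ s, ((G.deleteEdges X).degree v + (fromEdgeSet X).degree v) :=
        sum_le_sum fun v _ => hdeg v
    _ ≤ _ := by
        rw [sum_add_distrib]
        exact Nat.add_le_add_left hX _

end SimpleGraph

theorem stmt_4_general {V : Type*} [Fintype V] (G : SimpleGraph V) (d k : ℕ)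
    (hreg : ∀ v : V, (G.neighborSet v).ncard = d)
    (heven : Even (Fintype.card V))
    (X : Set (Sym2 V)) (hXcard : X.ncard = d - 1 + k)
    (I : Set V) (hI : I.Pairwise (fun a b => ¬ (G.deleteEdges X).Adj a b))
    (hIbig : 2 * I.ncard > Fintype.card V) :
    {e | e ∈ (G.deleteEdges X).edgeSet ∧ ∀ v ∈ e, v ∉ I}.ncard ≤ k - 1 := by
  classical
  lift I to Finset V using I.toFinite
  simp only [Finset.mem_coe, Set.ncard_coe_finset] at hIbig ⊢
  have hdeg (v : V) : G.degree v = d := by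
    rw [← hreg v, ← Nat.card_coe_set_eq, Nat.card_eq_fintype_card,
      SimpleGraph.card_neighborSet_eq_degree]
  have hsumI : d * #I ≤ ∑ v ∈ I, (G.deleteEdges X).degree v + 2 * X.ncard := by
    simpa [hdeg, mul_comm] using G.sum_degree_le_sum_degree_deleteEdges_add X I
  have hsumIc : ∑ v ∈ Iᶜ, (G.deleteEdges X).degree v ≤ d * #Iᶜ := by
    simpa [hdeg, mul_comm] using sum_le_sum fun v (_ : v ∈ Iᶜ) =>
      SimpleGraph.degree_le_of_le (v := v) (G.deleteEdges_le X)
  have hsplit := SimpleGraph.IsIndepSet.sum_degree_compl _ hI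
  have hgap : #Iᶜ + 2 ≤ #I := by
    obtain ⟨c, hc⟩ := heven
    have := card_add_card_compl I
    omega
  have hgap_mul := Nat.mul_le_mul_left d hgap
  rw [mul_add] at hgap_mul
  obtain rfl | hd := Nat.eq_zero_or_pos d
  · rw [zero_mul] at hsumIc
    omega
  · omega

/-- The "moreover" part of the main theorem: if `G` is `d`-regular, cyclically
`(d-1+2k)`-edge-connected, of even order, `X` is a set of `d-1+k` edges, `k ≥ 1`, and
`G - X` has an independent set `I` with more than half the vertices, then the vertices
outside `I` induce at most `k - 1` edges in `G - X`. -/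
theorem stmt_4 {V : Type*} [Fintype V] (G : SimpleGraph V) (d k : ℕ) (hk : 1 ≤ k)
    (hreg : ∀ v : V, (G.neighborSet v).ncard = d)
    (hcyc : ∀ S : Set V, ¬ (G.induce S).IsAcyclic → ¬ (G.induce (Sᶜ : Set V)).IsAcyclic →
      d - 1 + 2 * k ≤ {e | e ∈ G.edgeSet ∧ ∃ u ∈ S, ∃ w ∈ (Sᶜ : Set V), e = s(u, w)}.ncard)
    (heven : Even (Fintype.card V))
    (X : Set (Sym2 V)) (hX : X ⊆ G.edgeSet) (hXcard : X.ncard = d - 1 + k)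
    (I : Set V) (hI : I.Pairwise (fun a b => ¬ (G.deleteEdges X).Adj a b))
    (hIbig : 2 * I.ncard > Fintype.card V) :
    {e | e ∈ (G.deleteEdges X).edgeSet ∧ ∀ v ∈ e, v ∉ I}.ncard ≤ k - 1 :=
  stmt_4_general G d k hreg heven X hXcard I hI hIbig
end

section
/- Let G be a cubic graph, P a path in G of length 4, and I an independent set of G - E(P) with |I| > |V(G)|/2. Let J = V(G) - I, let s be the number of edges of G induced by I and t the number of edges of G induced by J. Then |I| = |J| + 2 and s = t + 3; in particular s = 3 or s = 4. -/
open Finset in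
open scoped Classical in
private lemma aux_filter_card {V : Type*} [Fintype V] (A : Finset V) {a b : V} (hab : a ≠ b) :
    (A.filter (· ∈ s(a, b))).card =
      (if a ∈ A then 1 else 0) + (if b ∈ A then 1 else 0) := by
  rw [Finset.card_filter]
  have : ∀ v ∈ A, (if v ∈ s(a,b) then 1 else 0) =
      ((if v = a then 1 else 0) + (if v = b then 1 else 0)) := by
    intro v _
    by_cases h1 : v = a
    · subst h1; simp [Sym2.mem_iff, hab]
    · by_cases h2 : v = b
      · subst h2; simp [Sym2.mem_iff, h1]
      · simp [Sym2.mem_iff, h1, h2]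
  rw [Finset.sum_congr rfl this, Finset.sum_add_distrib,
    Finset.sum_ite_eq' A a (fun _ => 1), Finset.sum_ite_eq' A b (fun _ => 1)]

open Finset in
open scoped Classical in
private lemma aux_count {V : Type*} [Fintype V] (G : SimpleGraph V)
    (hcub : ∀ v : V, (G.neighborSet v).ncard = 3) (A : Finset V) :
    3 * A.card = 2 * (G.edgeFinset.filter (fun e => ∀ v ∈ e, v ∈ A)).card
      + (G.edgeFinset.filter
          (fun e => ¬(∀ v ∈ e, v ∈ A) ∧ ¬(∀ v ∈ e, v ∉ A))).card := by
  have hdeg : ∀ v : V, G.degree v = 3 := by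
    intro v
    rw [← hcub v, SimpleGraph.degree, SimpleGraph.neighborFinset,
      Set.ncard_eq_toFinset_card']
  have h1 : ∑ v ∈ A, G.degree v = 3 * A.card := by
    simp [hdeg, mul_comm]
  have h2 : ∑ v ∈ A, G.degree v
      = ∑ e ∈ G.edgeFinset, (A.filter (· ∈ e)).card := by
    calc ∑ v ∈ A, G.degree v = ∑ v ∈ A, (G.incidenceFinset v).card := by
          simp [SimpleGraph.card_incidenceFinset_eq_degree]
      _ = ∑ v ∈ A, (G.edgeFinset.filter (v ∈ ·)).card := by
          simp_rw [SimpleGraph.incidenceFinset_eq_filter]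
      _ = ∑ v ∈ A, ∑ e ∈ G.edgeFinset, if v ∈ e then 1 else 0 := by
          simp only [Finset.card_filter]
      _ = ∑ e ∈ G.edgeFinset, ∑ v ∈ A, if v ∈ e then 1 else 0 := Finset.sum_comm
      _ = _ := by simp only [Finset.card_filter]
  -- now split the edge sum
  have h3 : ∑ e ∈ G.edgeFinset, (A.filter (· ∈ e)).card
      = 2 * (G.edgeFinset.filter (fun e => ∀ v ∈ e, v ∈ A)).card
      + (G.edgeFinset.filter
          (fun e => ¬(∀ v ∈ e, v ∈ A) ∧ ¬(∀ v ∈ e, v ∉ A))).card := by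
    rw [← Finset.sum_filter_add_sum_filter_not G.edgeFinset (fun e => ∀ v ∈ e, v ∈ A)]
    congr 1
    · rw [Finset.sum_congr rfl (g := fun _ => 2), Finset.sum_const, smul_eq_mul, mul_comm]
      intro e he
      simp only [Finset.mem_filter] at he
      obtain ⟨he1, he2⟩ := he
      rw [SimpleGraph.mem_edgeFinset] at he1
      induction e with
      | h a b =>
        have hadj : G.Adj a b := he1
        have hab : a ≠ b := hadj.ne
        rw [aux_filter_card A hab]
        have ha : a ∈ A := he2 a (by simp)
        have hb : b ∈ A := he2 b (by simp)
        simp [ha, hb]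
    · rw [← Finset.sum_filter_add_sum_filter_not
        (G.edgeFinset.filter (fun e => ¬∀ v ∈ e, v ∈ A)) (fun e => ¬(∀ v ∈ e, v ∉ A))]
      have hzero : ∑ e ∈ ((G.edgeFinset.filter (fun e => ¬∀ v ∈ e, v ∈ A)).filter
          (fun e => ¬¬(∀ v ∈ e, v ∉ A))), (A.filter (· ∈ e)).card = 0 := by
        apply Finset.sum_eq_zero
        intro e he
        simp only [Finset.mem_filter, not_not] at he
        rw [Finset.card_eq_zero, Finset.filter_eq_empty_iff]
        intro v hv hve
        exact he.2 v hve hv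
      have hone : ∑ e ∈ ((G.edgeFinset.filter (fun e => ¬∀ v ∈ e, v ∈ A)).filter
          (fun e => ¬(∀ v ∈ e, v ∉ A))), (A.filter (· ∈ e)).card
          = (G.edgeFinset.filter
            (fun e => ¬(∀ v ∈ e, v ∈ A) ∧ ¬(∀ v ∈ e, v ∉ A))).card := by
        rw [Finset.filter_filter]
        rw [Finset.sum_congr rfl (g := fun _ => 1), Finset.sum_const, smul_eq_mul, mul_one]
        intro e he
        simp only [Finset.mem_filter] at he
        obtain ⟨he1, hnotall, hsome⟩ := he
        rw [SimpleGraph.mem_edgeFinset] at he1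
        induction e with
        | h a b =>
          have hadj : G.Adj a b := he1
          have hab : a ≠ b := hadj.ne
          rw [aux_filter_card A hab]
          simp only [Sym2.mem_iff, forall_eq_or_imp, forall_eq, not_and_or,
            not_not] at hnotall hsome
          rcases hnotall with h | h <;> rcases hsome with h' | h' <;>
            first
            | exact absurd h' h
            | simp [h, h']
      rw [hone, hzero]
      omega
  omega

/-- Counting lemma: if `G` is cubic, `P` is a path of length 4 and `I` is an independent
set of `G - E(P)` with `|I| > |V(G)|/2`, then with `J = V(G) - I`, `s` the number of
edges of `G` inside `I` and `t` the number inside `J`, we have `|I| = |J| + 2` and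
`s = t + 3`; in particular `s = 3` or `s = 4`. -/
theorem stmt_16 {V : Type*} [Fintype V] (G : SimpleGraph V)
    (hcub : ∀ v : V, (G.neighborSet v).ncard = 3)
    {x y : V} (P : G.Walk x y) (hP : P.IsPath) (hlen : P.length = 4)
    (I : Set V) (hI : I.Pairwise (fun a b => ¬ (G.deleteEdges {e | e ∈ P.edges}).Adj a b))
    (hbig : 2 * I.ncard > Fintype.card V) :
    I.ncard = (Iᶜ : Set V).ncard + 2 ∧
    {e | e ∈ G.edgeSet ∧ ∀ v ∈ e, v ∈ I}.ncard =
      {e | e ∈ G.edgeSet ∧ ∀ v ∈ e, v ∈ (Iᶜ : Set V)}.ncard + 3 ∧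
    ({e | e ∈ G.edgeSet ∧ ∀ v ∈ e, v ∈ I}.ncard = 3 ∨
      {e | e ∈ G.edgeSet ∧ ∀ v ∈ e, v ∈ I}.ncard = 4) := by
  classical
  set A : Finset V := I.toFinset with hA
  have hmemA : ∀ v, v ∈ A ↔ v ∈ I := fun v => Set.mem_toFinset
  -- identify the two edge sets with finset filters
  have hSI : {e | e ∈ G.edgeSet ∧ ∀ v ∈ e, v ∈ I}
      = ↑(G.edgeFinset.filter (fun e => ∀ v ∈ e, v ∈ A)) := by
    ext e
    simp [hmemA, Set.mem_setOf_eq]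
  have hSJ : {e | e ∈ G.edgeSet ∧ ∀ v ∈ e, v ∈ (Iᶜ : Set V)}
      = ↑(G.edgeFinset.filter (fun e => ∀ v ∈ e, v ∈ Aᶜ)) := by
    ext e
    simp [hmemA, Set.mem_setOf_eq]
  set s := (G.edgeFinset.filter (fun e => ∀ v ∈ e, v ∈ A)).card with hs
  set t := (G.edgeFinset.filter (fun e => ∀ v ∈ e, v ∈ Aᶜ)).card with ht
  have hncI : I.ncard = A.card := (Set.ncard_eq_toFinset_card' I)
  have hncJ : (Iᶜ : Set V).ncard = Aᶜ.card := by
    rw [Set.ncard_eq_toFinset_card' (Iᶜ)]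
    congr 1
    ext v
    simp [hmemA]
  have hncS : {e | e ∈ G.edgeSet ∧ ∀ v ∈ e, v ∈ I}.ncard = s := by
    rw [hSI, Set.ncard_coe_finset]
  have hncT : {e | e ∈ G.edgeSet ∧ ∀ v ∈ e, v ∈ (Iᶜ : Set V)}.ncard = t := by
    rw [hSJ, Set.ncard_coe_finset]
  -- counting identities
  have hcount1 := aux_count G hcub A
  have hcount2 := aux_count G hcub Aᶜ
  -- the "mixed" sets are equal
  have hmixed : (G.edgeFinset.filter
        (fun e => ¬(∀ v ∈ e, v ∈ Aᶜ) ∧ ¬(∀ v ∈ e, v ∉ Aᶜ))).card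
      = (G.edgeFinset.filter
        (fun e => ¬(∀ v ∈ e, v ∈ A) ∧ ¬(∀ v ∈ e, v ∉ A))).card := by
    congr 1
    apply Finset.filter_congr
    intro e _
    simp only [Finset.mem_compl, not_not]
    tauto
  -- second counting with t: note (∀ v ∈ e, v ∈ Aᶜ) is the filter in hcount2
  rw [hmixed] at hcount2
  -- s ≤ 4
  have hs4 : s ≤ 4 := by
    have hsub : G.edgeFinset.filter (fun e => ∀ v ∈ e, v ∈ A) ⊆ P.edges.toFinset := by
      intro e he
      simp only [Finset.mem_filter, SimpleGraph.mem_edgeFinset] at he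
      obtain ⟨he1, he2⟩ := he
      rw [List.mem_toFinset]
      induction e with
      | h a b =>
        have hadj : G.Adj a b := he1
        have ha : a ∈ I := (hmemA a).mp (he2 a (by simp))
        have hb : b ∈ I := (hmemA b).mp (he2 b (by simp))
        by_contra hne
        exact hI ha hb hadj.ne (by
          rw [SimpleGraph.deleteEdges_adj]
          exact ⟨hadj, hne⟩)
    calc s ≤ P.edges.toFinset.card := Finset.card_le_card hsub
      _ ≤ P.edges.length := List.toFinset_card_le _
      _ = 4 := by rw [SimpleGraph.Walk.length_edges, hlen]
  -- cardinalities
  have hcompl : A.card + Aᶜ.card = Fintype.card V := by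
    rw [Finset.card_add_card_compl]
  rw [hncI] at hbig
  rw [hncI, hncJ, hncS, hncT]
  omega
end
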